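/- Let G₁ and G₂ be finite groups such that there is an order isomorphism between the posets Iso(G₁) and Iso(G₂). If |G₁| = p₁^{α₁} p₂^{α₂} ⋯ p_k^{α_k} with p₁, ..., p_k distinct primes and each α_i ≥ 1, then there exist distinct primes q₁, ..., q_k such that |G₂| = q₁^{α₁} q₂^{α₂} ⋯ q_k^{α_k}; equivalently, there is a bijection σ between the set of prime divisors of |G₁| and the set of prime divisors of |G₂| such that for every prime p dividing |G₁|, the multiplicity of p in the factorization of |G₁| equals the multiplicity of σ(p) in the factorization of |G₂|. -/

import Mathlib

/-!
Atoms of `IsoClasses G` are exactly the classes of subgroups of prime order, so an order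
isomorphism matches the prime divisors of `|G₁|` with those of `|G₂|`. For the atom `a` given by
a prime `p`, the elements whose only atom below is `a` are the classes of `p`-subgroups; their
poset has Krull dimension `v_p(|G|)`, since orders of `p`-subgroups are powers of `p` dividing `|G|`
and Sylow's theorem provides a chain of `p`-subgroups of orders `1, p, …, p ^ v_p(|G|)`. Krull
dimension is invariant under order isomorphism, so matched primes have equal multiplicities.
-/

/-- The setoid on subgroups of `G` given by group isomorphism. -/
def isoSetoid (G : Type*) [Group G] : Setoid (Subgroup G) where
  r H K := Nonempty (H ≃* K)
  iseqv := ⟨fun H => ⟨MulEquiv.refl H⟩, fun ⟨e⟩ => ⟨e.symm⟩, fun ⟨e⟩ ⟨f⟩ => ⟨e.trans f⟩⟩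

/-- `IsoClasses G` is the set of equivalence classes of subgroups of `G`
under group isomorphism. -/
def IsoClasses (G : Type*) [Group G] : Type _ := Quotient (isoSetoid G)

/-- The class of a subgroup `H` in `IsoClasses G`. -/
def IsoCls {G : Type*} [Group G] (H : Subgroup G) : IsoClasses G :=
  Quotient.mk (isoSetoid G) H

/-- `[H] ≤ [K]` iff some member of `[H]` is contained in some member of `[K]`. -/
instance instLEIsoClasses (G : Type*) [Group G] : LE (IsoClasses G) where
  le x y := ∃ H K : Subgroup G, IsoCls H = x ∧ IsoCls K = y ∧ H ≤ K

section PrimeFactorsProdPow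

variable {ι : Type*} [Fintype ι] {p α : ι → ℕ}

theorem Nat.factorization_prod_pow_apply (hp : ∀ i, (p i).Prime) (hpinj : Function.Injective p)
    (j : ι) : (∏ i, p i ^ α i).factorization (p j) = α j := by
  rw [Nat.factorization_prod fun i _ => pow_ne_zero _ (hp i).ne_zero, Finset.sum_apply',
    Finset.sum_eq_single j]
  · simp [(hp j).factorization_pow]
  · intro i _ hij
    rw [(hp i).factorization_pow, Finsupp.single_eq_of_ne (hpinj.ne hij.symm)]
  · simp

theorem Nat.mem_primeFactors_prod_pow (hp : ∀ i, (p i).Prime) (hα : ∀ i, α i ≠ 0) (j : ι) :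
    p j ∈ (∏ i, p i ^ α i).primeFactors :=
  Nat.mem_primeFactors.2 ⟨hp j,
    (dvd_pow_self _ (hα j)).trans (Finset.dvd_prod_of_mem _ (Finset.mem_univ j)),
    Finset.prod_ne_zero_iff.2 fun i _ => pow_ne_zero _ (hp i).ne_zero⟩

theorem Nat.exists_eq_of_mem_primeFactors_prod_pow (hp : ∀ i, (p i).Prime) {r : ℕ}
    (hr : r ∈ (∏ i, p i ^ α i).primeFactors) : ∃ i, p i = r := by
  obtain ⟨hr, hdvd, -⟩ := Nat.mem_primeFactors.1 hr
  obtain ⟨i, -, hi⟩ := hr.prime.exists_mem_finset_dvd hdvd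
  exact ⟨i, ((Nat.prime_dvd_prime_iff_eq hr (hp i)).1 (hr.dvd_of_dvd_pow hi)).symm⟩

noncomputable def Nat.equivPrimeFactorsProdPow (hp : ∀ i, (p i).Prime)
    (hpinj : Function.Injective p) (hα : ∀ i, α i ≠ 0) : ι ≃ (∏ i, p i ^ α i).primeFactors :=
  Equiv.ofBijective (fun i => ⟨p i, Nat.mem_primeFactors_prod_pow hp hα i⟩)
    ⟨fun _ _ h => hpinj (congrArg Subtype.val h), fun r =>
      (Nat.exists_eq_of_mem_primeFactors_prod_pow hp r.2).imp fun _ hi => Subtype.ext hi⟩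

theorem Nat.exists_eq_prod_pow_of_primeFactors_equiv (hp : ∀ i, (p i).Prime)
    (hpinj : Function.Injective p) (hα : ∀ i, α i ≠ 0) {n m : ℕ} (hn : n = ∏ i, p i ^ α i)
    (hm : m ≠ 0) (σ : n.primeFactors ≃ m.primeFactors)
    (hσ : ∀ r, m.factorization (σ r) = n.factorization r) :
    ∃ q : ι → ℕ, (∀ i, (q i).Prime) ∧ Function.Injective q ∧ m = ∏ i, q i ^ α i := by
  subst hn
  let e := (Nat.equivPrimeFactorsProdPow hp hpinj hα).trans σ
  refine ⟨fun i => e i, fun i => Nat.prime_of_mem_primeFactors (e i).2,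
    Subtype.val_injective.comp e.injective, ?_⟩
  have hfact (i : ι) : m.factorization (e i) = α i :=
    (hσ _).trans (Nat.factorization_prod_pow_apply hp hpinj i)
  conv_lhs => rw [Nat.prod_primeFactors_coe_pow_factorization hm, ← e.prod_comp]
  simp only [hfact]

end PrimeFactorsProdPow

open Order

section OnlyAtomBelow

variable {α β : Type*} [PartialOrder α] [OrderBot α] [PartialOrder β] [OrderBot β]

/-- In `IsoClasses G`, for `a` the class of a subgroup of prime order `p`, this is the set of
classes of `p`-subgroups. -/
def onlyAtomBelow (a : α) : Set α := {x | ∀ b, IsAtom b → b ≤ x → b = a}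

theorem OrderIso.mapsTo_onlyAtomBelow (f : α ≃o β) (a : α) :
    Set.MapsTo f (onlyAtomBelow a) (onlyAtomBelow (f a)) := by
  intro x hx b hb hbx
  rw [← f.apply_symm_apply b, hx _ ((f.symm.isAtom_iff b).2 hb) (f.symm_apply_le.2 hbx)]

theorem OrderIso.krullDim_onlyAtomBelow_le (f : α ≃o β) (a : α) :
    krullDim (onlyAtomBelow a) ≤ krullDim (onlyAtomBelow (f a)) :=
  krullDim_le_of_strictMono ((f.mapsTo_onlyAtomBelow a).restrict _ _ _)
    fun _ _ h => f.strictMono h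

theorem OrderIso.krullDim_onlyAtomBelow (f : α ≃o β) (a : α) :
    krullDim (onlyAtomBelow (f a)) = krullDim (onlyAtomBelow a) := by
  refine le_antisymm ?_ (f.krullDim_onlyAtomBelow_le a)
  have h := f.symm.krullDim_onlyAtomBelow_le (f a)
  rwa [f.symm_apply_apply] at h

end OnlyAtomBelow

namespace IsoClasses

variable {G : Type*} [Group G]

theorem exists_isoCls (x : IsoClasses G) : ∃ H : Subgroup G, IsoCls H = x :=
  Quotient.exists_rep x

theorem isoCls_eq_iff {H K : Subgroup G} : IsoCls H = IsoCls K ↔ Nonempty (H ≃* K) :=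
  Quotient.eq (r := isoSetoid G)

theorem isoCls_le_iff {H K : Subgroup G} :
    IsoCls H ≤ IsoCls K ↔ ∃ f : H →* K, Function.Injective f := by
  constructor
  · rintro ⟨H', K', hH, hK, hle⟩
    obtain ⟨eH⟩ := isoCls_eq_iff.1 hH
    obtain ⟨eK⟩ := isoCls_eq_iff.1 hK
    exact ⟨eK.toMonoidHom.comp ((Subgroup.inclusion hle).comp eH.symm.toMonoidHom),
      eK.injective.comp ((Subgroup.inclusion_injective hle).comp eH.symm.injective)⟩
  · rintro ⟨f, hf⟩
    refine ⟨f.range.map K.subtype, K, isoCls_eq_iff.2 ⟨?_⟩, rfl, Subgroup.map_subtype_le _⟩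
    exact ((MonoidHom.ofInjective hf).trans
      (f.range.equivMapOfInjective _ K.subtype_injective)).symm

instance : Preorder (IsoClasses G) where
  le_refl x := by
    obtain ⟨H, rfl⟩ := exists_isoCls x
    exact ⟨H, H, rfl, rfl, le_rfl⟩
  le_trans x y z := by
    obtain ⟨H, rfl⟩ := exists_isoCls x
    obtain ⟨K, rfl⟩ := exists_isoCls y
    obtain ⟨L, rfl⟩ := exists_isoCls z
    simp only [isoCls_le_iff]
    rintro ⟨f, hf⟩ ⟨g, hg⟩
    exact ⟨g.comp f, hg.comp hf⟩

instance : OrderBot (IsoClasses G) where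
  bot := IsoCls ⊥
  bot_le x := by
    obtain ⟨H, rfl⟩ := exists_isoCls x
    exact ⟨⊥, H, rfl, rfl, bot_le⟩

noncomputable def clsCard : IsoClasses G → ℕ :=
  Quotient.lift (fun H : Subgroup G => Nat.card H) fun _ _ ⟨e⟩ => Nat.card_congr e.toEquiv

@[simp] theorem clsCard_isoCls (H : Subgroup G) : clsCard (IsoCls H) = Nat.card H := rfl

theorem clsCard_dvd_of_le {x y : IsoClasses G} (h : x ≤ y) : clsCard x ∣ clsCard y := by
  obtain ⟨H, K, rfl, rfl, hle⟩ := h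
  exact Subgroup.card_dvd_of_le hle

theorem clsCard_bot : clsCard (⊥ : IsoClasses G) = 1 := Subgroup.card_bot

theorem eq_bot_iff_clsCard_eq_one {x : IsoClasses G} : x = ⊥ ↔ clsCard x = 1 := by
  refine ⟨fun h => h ▸ clsCard_bot, fun h => ?_⟩
  obtain ⟨H, rfl⟩ := exists_isoCls x
  rw [clsCard_isoCls, Subgroup.card_eq_one] at h
  rw [h]
  rfl

theorem eq_of_clsCard_eq_prime {x y : IsoClasses G} (hp : (clsCard x).Prime)
    (h : clsCard x = clsCard y) : x = y := by
  obtain ⟨H, rfl⟩ := exists_isoCls x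
  obtain ⟨K, rfl⟩ := exists_isoCls y
  have : Fact (Nat.card H).Prime := ⟨hp⟩
  exact isoCls_eq_iff.2 ⟨mulEquivOfPrimeCardEq rfl h.symm⟩

theorem clsCard_dvd_card (x : IsoClasses G) : clsCard x ∣ Nat.card G := by
  obtain ⟨H, rfl⟩ := exists_isoCls x
  exact Subgroup.card_subgroup_dvd_card H

variable [Finite G]

theorem clsCard_pos (x : IsoClasses G) : 0 < clsCard x := by
  obtain ⟨H, rfl⟩ := exists_isoCls x
  exact Nat.card_pos

theorem eq_of_le_of_clsCard_le {x y : IsoClasses G} (h : x ≤ y) (hc : clsCard y ≤ clsCard x) :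
    x = y := by
  obtain ⟨H, K, rfl, rfl, hle⟩ := h
  exact congrArg IsoCls (Subgroup.eq_of_le_of_card_ge hle hc)

instance : PartialOrder (IsoClasses G) where
  le_antisymm _ _ hxy hyx :=
    eq_of_le_of_clsCard_le hxy (Nat.le_of_dvd (clsCard_pos _) (clsCard_dvd_of_le hyx))

theorem clsCard_strictMono : StrictMono (clsCard : IsoClasses G → ℕ) := fun _ _ h =>
  (Nat.le_of_dvd (clsCard_pos _) (clsCard_dvd_of_le h.le)).lt_of_ne
    fun hc => h.ne (eq_of_le_of_clsCard_le h.le hc.ge)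

theorem exists_le_clsCard_eq_of_prime_dvd {x : IsoClasses G} {p : ℕ} (hp : p.Prime)
    (hdvd : p ∣ clsCard x) : ∃ y ≤ x, clsCard y = p := by
  have := Fact.mk hp
  obtain ⟨K, rfl⟩ := exists_isoCls x
  obtain ⟨g, hg⟩ := exists_prime_orderOf_dvd_card' (G := K) p hdvd
  refine ⟨IsoCls (Subgroup.zpowers (g : G)), ⟨_, K, rfl, rfl, Subgroup.zpowers_le.2 g.2⟩, ?_⟩
  rw [clsCard_isoCls, Nat.card_zpowers, Subgroup.orderOf_coe, hg]

theorem isAtom_iff_prime_clsCard {x : IsoClasses G} : IsAtom x ↔ (clsCard x).Prime := by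
  constructor
  · intro hx
    have hne : clsCard x ≠ 1 := fun h => hx.1 (eq_bot_iff_clsCard_eq_one.2 h)
    obtain ⟨p, hp, hdvd⟩ := Nat.exists_prime_and_dvd hne
    obtain ⟨y, hyx, hy⟩ := exists_le_clsCard_eq_of_prime_dvd hp hdvd
    rcases hx.le_iff.1 hyx with rfl | rfl
    · exact absurd (clsCard_bot.symm.trans hy) hp.ne_one.symm
    · rwa [hy]
  · intro hp
    refine ⟨fun h => hp.ne_one (eq_bot_iff_clsCard_eq_one.1 h), fun y hyx => ?_⟩
    rcases hp.eq_one_or_self_of_dvd _ (clsCard_dvd_of_le hyx.le) with h | h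
    · exact eq_bot_iff_clsCard_eq_one.2 h
    · exact absurd (clsCard_strictMono hyx) h.not_lt

theorem mem_onlyAtomBelow_iff {x y : IsoClasses G} (hx : IsAtom x) :
    y ∈ onlyAtomBelow x ↔ ∃ k, clsCard y = clsCard x ^ k := by
  have hp := isAtom_iff_prime_clsCard.1 hx
  constructor
  · intro hy
    refine ⟨_, Nat.eq_prime_pow_of_unique_prime_dvd (clsCard_pos y).ne' fun {r} hr hdvd => ?_⟩
    obtain ⟨z, hzy, hz⟩ := exists_le_clsCard_eq_of_prime_dvd hr hdvd
    rw [← hz, hy z (isAtom_iff_prime_clsCard.2 (hz ▸ hr)) hzy]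
  · rintro ⟨k, hk⟩ b hb hby
    have hb' := isAtom_iff_prime_clsCard.1 hb
    have hdvd : clsCard b ∣ clsCard x ^ k := hk ▸ clsCard_dvd_of_le hby
    exact eq_of_clsCard_eq_prime hb'
      ((Nat.prime_dvd_prime_iff_eq hb' hp).1 (hb'.dvd_of_dvd_pow hdvd))

theorem clsCard_eq_pow_factorization {x y : IsoClasses G} (hx : IsAtom x)
    (hy : y ∈ onlyAtomBelow x) : clsCard y = clsCard x ^ (clsCard y).factorization (clsCard x) := by
  obtain ⟨k, hk⟩ := (mem_onlyAtomBelow_iff hx).1 hy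
  rw [hk, (isAtom_iff_prime_clsCard.1 hx).factorization_pow, Finsupp.single_eq_same]

theorem krullDim_onlyAtomBelow_le_factorization {x : IsoClasses G} (hx : IsAtom x) :
    krullDim (onlyAtomBelow x) ≤ (Nat.card G).factorization (clsCard x) := by
  have hp := isAtom_iff_prime_clsCard.1 hx
  let v : onlyAtomBelow x → ℕ := fun y => (clsCard y.1).factorization (clsCard x)
  have hv : StrictMono v := fun y z hyz => (Nat.pow_lt_pow_iff_right hp.one_lt).1 <| by
    rw [← clsCard_eq_pow_factorization hx y.2, ← clsCard_eq_pow_factorization hx z.2]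
    exact clsCard_strictMono hyz
  rw [krullDim_eq_iSup_height]
  refine iSup_le fun y => ?_
  have hvy : v y ≤ (Nat.card G).factorization (clsCard x) :=
    (hp.pow_dvd_iff_le_factorization Nat.card_pos.ne').1
      (clsCard_eq_pow_factorization hx y.2 ▸ clsCard_dvd_card y.1)
  have hy := (height_le_height_apply_of_strictMono v hv y).trans_eq (height_nat _)
  exact_mod_cast hy.trans (by exact_mod_cast hvy)

theorem exists_le_height_of_le_factorization {x : IsoClasses G} (hx : IsAtom x) {k : ℕ}
    (hk : k ≤ (Nat.card G).factorization (clsCard x)) :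
    ∃ y : onlyAtomBelow x, clsCard y.1 = clsCard x ^ k ∧ (k : ℕ∞) ≤ height y := by
  have hp := isAtom_iff_prime_clsCard.1 hx
  have := Fact.mk hp
  induction k with
  | zero => exact ⟨⟨⊥, (mem_onlyAtomBelow_iff hx).2 ⟨0, clsCard_bot⟩⟩, clsCard_bot, by simp⟩
  | succ k ih =>
    obtain ⟨⟨y, hy⟩, hcard, hheight⟩ := ih (Nat.le_of_succ_le hk)
    obtain ⟨H, rfl⟩ := exists_isoCls y
    replace hcard : Nat.card H = clsCard x ^ k := hcard
    obtain ⟨K, hK, hHK⟩ := Sylow.exists_subgroup_card_pow_succ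
      ((hp.pow_dvd_iff_le_factorization Nat.card_pos.ne').2 hk) hcard
    let z : onlyAtomBelow x := ⟨IsoCls K, (mem_onlyAtomBelow_iff hx).2 ⟨k + 1, hK⟩⟩
    have hlt : (⟨IsoCls H, hy⟩ : onlyAtomBelow x) < z := by
      refine lt_of_le_of_ne ⟨H, K, rfl, rfl, hHK⟩ (ne_of_apply_ne (fun y => clsCard y.1) ?_)
      change Nat.card H ≠ Nat.card K
      rw [hcard, hK]
      exact (Nat.pow_lt_pow_right hp.one_lt k.lt_succ_self).ne
    exact ⟨z, hK, le_trans (by push_cast; gcongr) (height_add_one_le hlt)⟩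

theorem krullDim_onlyAtomBelow {x : IsoClasses G} (hx : IsAtom x) :
    krullDim (onlyAtomBelow x) = (Nat.card G).factorization (clsCard x) := by
  refine le_antisymm (krullDim_onlyAtomBelow_le_factorization hx) ?_
  obtain ⟨y, -, hy⟩ := exists_le_height_of_le_factorization hx le_rfl
  exact (WithBot.coe_le_coe.2 hy).trans (height_le_krullDim y)

noncomputable def atomsEquivPrimeFactors :
    {x : IsoClasses G // IsAtom x} ≃ (Nat.card G).primeFactors :=
  Equiv.ofBijective
    (fun x => ⟨clsCard x.1, Nat.mem_primeFactors.2
      ⟨isAtom_iff_prime_clsCard.1 x.2, clsCard_dvd_card _, Nat.card_pos.ne'⟩⟩)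
    ⟨fun x y h => Subtype.ext
      (eq_of_clsCard_eq_prime (isAtom_iff_prime_clsCard.1 x.2) (congrArg Subtype.val h)),
    fun r => by
      obtain ⟨hr, hdvd, -⟩ := Nat.mem_primeFactors.1 r.2
      obtain ⟨y, -, hy⟩ := exists_le_clsCard_eq_of_prime_dvd (x := IsoCls (⊤ : Subgroup G)) hr
        (by rwa [clsCard_isoCls, Subgroup.card_top])
      exact ⟨⟨y, isAtom_iff_prime_clsCard.2 (hy ▸ hr)⟩, Subtype.ext hy⟩⟩

theorem coe_atomsEquivPrimeFactors (x : {x : IsoClasses G // IsAtom x}) :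
    (atomsEquivPrimeFactors x : ℕ) = clsCard x.1 := rfl

variable {G₁ G₂ : Type*} [Group G₁] [Finite G₁] [Group G₂] [Finite G₂]

noncomputable def primeFactorsEquiv (f : IsoClasses G₁ ≃o IsoClasses G₂) :
    (Nat.card G₁).primeFactors ≃ (Nat.card G₂).primeFactors :=
  atomsEquivPrimeFactors.symm.trans <|
    (f.toEquiv.subtypeEquiv fun x => (f.isAtom_iff x).symm).trans atomsEquivPrimeFactors

theorem factorization_primeFactorsEquiv (f : IsoClasses G₁ ≃o IsoClasses G₂)
    (r : (Nat.card G₁).primeFactors) :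
    (Nat.card G₂).factorization (primeFactorsEquiv f r) = (Nat.card G₁).factorization r := by
  set x := atomsEquivPrimeFactors.symm r
  have hr : (r : ℕ) = clsCard x.1 := by
    rw [← coe_atomsEquivPrimeFactors, Equiv.apply_symm_apply]
  have h := f.krullDim_onlyAtomBelow x.1
  rw [krullDim_onlyAtomBelow x.2, krullDim_onlyAtomBelow ((f.isAtom_iff _).2 x.2)] at h
  change (Nat.card G₂).factorization (clsCard (f x.1)) = _
  rw [hr]
  exact_mod_cast h

end IsoClasses

/-- If `IsoClasses G₁` and `IsoClasses G₂` are order isomorphic and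
`|G₁| = p₁^α₁ ⋯ p_k^α_k` with `p₁, …, p_k` distinct primes and each `α_i ≥ 1`, then
`|G₂| = q₁^α₁ ⋯ q_k^α_k` for some distinct primes `q₁, …, q_k`; equivalently, there is a
bijection between the prime divisors of `|G₁|` and those of `|G₂|` preserving
multiplicities. -/
theorem card_factorization_of_isoClasses_orderIso
    (G₁ : Type*) [Group G₁] [Finite G₁] (G₂ : Type*) [Group G₂] [Finite G₂]
    (h : Nonempty (IsoClasses G₁ ≃o IsoClasses G₂))
    (k : ℕ) (p α : Fin k → ℕ) (hp : ∀ i, (p i).Prime) (hpinj : Function.Injective p)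
    (hα : ∀ i, 1 ≤ α i) (hcard : Nat.card G₁ = ∏ i, p i ^ α i) :
    (∃ q : Fin k → ℕ, (∀ i, (q i).Prime) ∧ Function.Injective q ∧
        Nat.card G₂ = ∏ i, q i ^ α i) ∧
      ∃ σ : (Nat.card G₁).primeFactors ≃ (Nat.card G₂).primeFactors,
        ∀ r : (Nat.card G₁).primeFactors,
          (Nat.card G₁).factorization r = (Nat.card G₂).factorization (σ r) := by
  obtain ⟨f⟩ := h
  have hσ := IsoClasses.factorization_primeFactorsEquiv f
  refine ⟨?_, IsoClasses.primeFactorsEquiv f, fun r => (hσ r).symm⟩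
  exact Nat.exists_eq_prod_pow_of_primeFactors_equiv hp hpinj
    (fun i => Nat.one_le_iff_ne_zero.1 (hα i)) hcard Nat.card_pos.ne' _ hσ
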